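/- One-dimensional eSURE identity: let x ∈ ℝ be fixed, n₁ ~ N(0, σ₁²), z ~ N(0, σ_z²) independent, y₁ = x + n₁, y₂ = y₁ + z. For h: ℝ → ℝ Lipschitz, E[(x - h(y₂))²] = E[(y₁ - h(y₂))²] - σ₁² + 2σ₁²·E[h'(y₂)]. -/

import Mathlib

/-!
Expanding the square, `E[(y₁ - h(y₂))²] = E[(x - h(y₂))²] + 2x E[n₁] + E[n₁²] - 2 E[n₁ h(y₂)]`.
The first two moments of `n₁` are `0` and `σ₁²`, and Stein's lemma `E[n₁ f(n₁)] = σ₁² E[f'(n₁)]`,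
applied for fixed `z` to `f = h(x + · + z)` and then integrated over `z`, turns the cross term
into `2σ₁² E[h'(y₂)]`. For Lipschitz `f`, Stein's lemma is integration by parts against the
Gaussian density, which is legitimate because Lipschitz functions are absolutely continuous.
-/

open MeasureTheory ProbabilityTheory Real Filter Topology
open scoped NNReal ENNReal

theorem integral_deriv_mul_add_mul_deriv_eq_zero {f g : ℝ → ℝ}
    (hf : ∀ a b, AbsolutelyContinuousOnInterval f a b)
    (hg : ∀ a b, AbsolutelyContinuousOnInterval g a b)
    (hint : Integrable fun x ↦ deriv f x * g x + f x * deriv g x)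
    (hfg : Tendsto (fun x ↦ f x * g x) (cocompact ℝ) (𝓝 0)) :
    ∫ x, deriv f x * g x + f x * deriv g x = 0 := by
  refine tendsto_nhds_unique (intervalIntegral_tendsto_integral hint tendsto_neg_atTop_atBot
    tendsto_id) ?_
  simp_rw [id, (hf _ _).integral_deriv_mul_eq_sub (hg _ _)]
  simpa using (hfg.mono_left atTop_le_cocompact).sub
    ((hfg.mono_left atBot_le_cocompact).comp tendsto_neg_atTop_atBot)

section Lipschitz

variable {α : Type*} [MeasurableSpace α] {μ : Measure α} [IsFiniteMeasure μ] {K : ℝ≥0}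

theorem LipschitzWith.memLp_comp {E F : Type*} [NormedAddCommGroup E] [NormedAddCommGroup F]
    {p : ℝ≥0∞} {g : E → F} (hg : LipschitzWith K g) {f : α → E} (hf : MemLp f p μ) :
    MemLp (fun a ↦ g (f a)) p μ := by
  have hg0 : LipschitzWith K fun y ↦ g y - g 0 := by
    simpa using hg.sub (LipschitzWith.const (g 0))
  convert (hg0.comp_memLp (by simp) hf).add (memLp_const (g 0)) using 1
  ext a
  simp

theorem LipschitzWith.integrable_deriv_comp {h : ℝ → ℝ} (hh : LipschitzWith K h) {f : α → ℝ}
    (hf : Measurable f) : Integrable (fun a ↦ deriv h (f a)) μ :=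
  .of_bound ((measurable_deriv h).comp hf).aestronglyMeasurable K
    (ae_of_all _ fun _ ↦ norm_deriv_le_of_lipschitz hh)

end Lipschitz

section Gaussian

theorem contDiff_gaussianPDFReal (μ : ℝ) (v : ℝ≥0) : ContDiff ℝ 1 (gaussianPDFReal μ v) := by
  rw [gaussianPDFReal_def]
  fun_prop

theorem hasDerivAt_gaussianPDFReal (μ : ℝ) (v : ℝ≥0) (x : ℝ) :
    HasDerivAt (gaussianPDFReal μ v) (-((x - μ) / v) * gaussianPDFReal μ v x) x := by
  have hsq : HasDerivAt (fun y ↦ (y - μ) ^ 2) (2 * (x - μ)) x := by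
    have := (hasDerivAt_pow 2 (x - μ)).comp x ((hasDerivAt_id x).sub_const μ)
    norm_num at this
    exact this
  have hexp : HasDerivAt (fun y ↦ -(y - μ) ^ 2 / (2 * v)) (-((x - μ) / v)) x :=
    (hsq.neg.div_const (2 * (v : ℝ))).congr_deriv (by ring)
  rw [gaussianPDFReal_def]
  exact (hexp.exp.const_mul (√(2 * π * v))⁻¹).congr_deriv (by ring)

theorem integrable_gaussianReal_iff {μ : ℝ} {v : ℝ≥0} (hv : v ≠ 0) {f : ℝ → ℝ} :
    Integrable f (gaussianReal μ v) ↔ Integrable fun x ↦ gaussianPDFReal μ v x * f x := by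
  rw [gaussianReal_of_var_ne_zero μ hv, integrable_withDensity_iff_integrable_smul'
    (measurable_gaussianPDF μ v) (ae_of_all _ fun _ ↦ gaussianPDF_lt_top)]
  simp

theorem integral_sq_gaussianReal (v : ℝ≥0) : ∫ x, x ^ 2 ∂gaussianReal 0 v = v := by
  have := variance_fun_id_gaussianReal (μ := 0) (v := v)
  rw [variance_eq_integral measurable_id'.aemeasurable, integral_id_gaussianReal] at this
  simpa using this

end Gaussian

section Stein

variable {h : ℝ → ℝ} {K : ℝ≥0}

theorem LipschitzWith.tendsto_mul_gaussianPDFReal {v : ℝ≥0} (hv : v ≠ 0)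
    (hh : LipschitzWith K h) :
    Tendsto (fun x ↦ h x * gaussianPDFReal 0 v x) (cocompact ℝ) (𝓝 0) := by
  have ha : (0 : ℝ) < (2 * (v : ℝ))⁻¹ := by positivity
  have hbound : ∀ x, ‖h x * gaussianPDFReal 0 v x‖ ≤ (√(2 * π * v))⁻¹ *
      (‖h 0‖ * (|x| ^ (0 : ℝ) * rexp (-(2 * (v : ℝ))⁻¹ * x ^ 2))
        + K * (|x| ^ (1 : ℝ) * rexp (-(2 * (v : ℝ))⁻¹ * x ^ 2))) := by
    intro x
    have hlin : ‖h x‖ ≤ ‖h 0‖ + K * |x| := by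
      have := hh.norm_sub_le x 0
      simp only [sub_zero, Real.norm_eq_abs] at this ⊢
      linarith [abs_sub_abs_le_abs_sub (h x) (h 0)]
    rw [norm_mul, Real.norm_of_nonneg (gaussianPDFReal_nonneg 0 v x), gaussianPDFReal_def]
    simp only [sub_zero, Real.rpow_zero, Real.rpow_one, one_mul]
    rw [show -x ^ 2 / (2 * v) = -(2 * (v : ℝ))⁻¹ * x ^ 2 by ring]
    have := mul_le_mul_of_nonneg_right hlin
      (by positivity : 0 ≤ (√(2 * π * v))⁻¹ * rexp (-(2 * (v : ℝ))⁻¹ * x ^ 2))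
    linarith
  refine squeeze_zero_norm hbound ?_
  simpa using ((tendsto_rpow_abs_mul_exp_neg_mul_sq_cocompact ha 0).const_mul ‖h 0‖).add
    ((tendsto_rpow_abs_mul_exp_neg_mul_sq_cocompact ha 1).const_mul (K : ℝ)) |>.const_mul _

/-- Stein's lemma. -/
theorem LipschitzWith.integral_mul_gaussianReal (hh : LipschitzWith K h) (v : ℝ≥0) :
    ∫ x, x * h x ∂gaussianReal 0 v = v * ∫ x, deriv h x ∂gaussianReal 0 v := by
  rcases eq_or_ne v 0 with rfl | hv
  · simp
  set φ := gaussianPDFReal 0 v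
  have hφ' : deriv φ = fun x ↦ -(x / v) * φ x := by
    ext x
    simpa using (hasDerivAt_gaussianPDFReal 0 v x).deriv
  have hmul : Integrable (fun x ↦ φ x * (x * h x)) := by
    rw [← integrable_gaussianReal_iff hv]
    have hid : MemLp id 2 (gaussianReal 0 v) := memLp_id_gaussianReal' 2 (by simp)
    exact hid.integrable_mul (hh.memLp_comp hid)
  have hderiv : Integrable (fun x ↦ φ x * deriv h x) := by
    rw [← integrable_gaussianReal_iff hv]
    exact hh.integrable_deriv_comp measurable_id
  have hsum : (fun x ↦ deriv h x * φ x + h x * deriv φ x)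
      = fun x ↦ φ x * deriv h x - (v : ℝ)⁻¹ * (φ x * (x * h x)) := by
    ext x
    rw [hφ']
    ring
  have hparts := integral_deriv_mul_add_mul_deriv_eq_zero
    (fun a b ↦ hh.lipschitzOnWith.absolutelyContinuousOnInterval)
    (fun a b ↦ (contDiff_gaussianPDFReal 0 v).contDiffOn.absolutelyContinuousOnInterval)
    (by rw [hsum]; exact hderiv.sub (hmul.const_mul _)) (hh.tendsto_mul_gaussianPDFReal hv)
  rw [hsum, integral_sub hderiv (hmul.const_mul _), integral_const_mul, sub_eq_zero] at hparts
  simp only [integral_gaussianReal_eq_integral_smul hv, smul_eq_mul]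
  rw [hparts, mul_inv_cancel_left₀ (NNReal.coe_ne_zero.mpr hv)]

theorem LipschitzWith.integral_fst_mul_gaussianReal_prod (hh : LipschitzWith K h) (v : ℝ≥0)
    {ν : Measure ℝ} [IsFiniteMeasure ν]
    (hint : Integrable (fun p : ℝ × ℝ ↦ p.1 * h (p.1 + p.2)) ((gaussianReal 0 v).prod ν)) :
    ∫ p, p.1 * h (p.1 + p.2) ∂(gaussianReal 0 v).prod ν
      = v * ∫ p, deriv h (p.1 + p.2) ∂(gaussianReal 0 v).prod ν := by
  rw [integral_prod_symm _ hint, integral_prod_symm _ (hh.integrable_deriv_comp (by fun_prop)),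
    ← integral_const_mul]
  congr 1 with w
  have hw : LipschitzWith K fun x ↦ h (x + w) := by
    simpa [Function.comp_def] using hh.comp (isometry_add_right w).lipschitz
  simpa [deriv_comp_add_const] using hw.integral_mul_gaussianReal v

theorem LipschitzWith.integral_sq_sub_gaussianReal_prod (hh : LipschitzWith K h) (v : ℝ≥0)
    {ν : Measure ℝ} [IsProbabilityMeasure ν] (hν : MemLp id 2 ν) (x : ℝ) :
    ∫ p, (x - h (x + p.1 + p.2)) ^ 2 ∂(gaussianReal 0 v).prod ν
      = ∫ p, (x + p.1 - h (x + p.1 + p.2)) ^ 2 ∂(gaussianReal 0 v).prod ν - v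
        + 2 * v * ∫ p, deriv h (x + p.1 + p.2) ∂(gaussianReal 0 v).prod ν := by
  set P := (gaussianReal 0 v).prod ν
  have hn : MemLp (fun p : ℝ × ℝ ↦ p.1) 2 P := (memLp_id_gaussianReal' 2 (by simp)).comp_fst _
  have hy : MemLp (fun p : ℝ × ℝ ↦ h (x + p.1 + p.2)) 2 P :=
    hh.memLp_comp (((memLp_const x).add hn).add (hν.comp_snd _))
  have hny : Integrable (fun p : ℝ × ℝ ↦ p.1 * h (x + p.1 + p.2)) P := hn.integrable_mul hy
  have hsq : Integrable (fun p : ℝ × ℝ ↦ (x - h (x + p.1 + p.2)) ^ 2) P :=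
    ((memLp_const x).sub hy).integrable_sq
  have hn₁ : Integrable (fun p : ℝ × ℝ ↦ 2 * x * p.1) P :=
    (hn.integrable one_le_two).const_mul (2 * x)
  have hshift : LipschitzWith K fun s ↦ h (x + s) := by
    simpa [Function.comp_def] using hh.comp (isometry_add_left x).lipschitz
  have stein := hshift.integral_fst_mul_gaussianReal_prod v (by simpa [add_assoc] using hny)
  simp only [← add_assoc, deriv_comp_const_add] at stein
  have hmean : ∫ p : ℝ × ℝ, p.1 ∂P = 0 := by
    simpa using integral_fun_fst (fun t : ℝ ↦ t) (μ := gaussianReal 0 v) (ν := ν)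
  have hvar : ∫ p : ℝ × ℝ, p.1 ^ 2 ∂P = v := by
    rw [← integral_sq_gaussianReal v]
    simpa using integral_fun_fst (fun t : ℝ ↦ t ^ 2) (μ := gaussianReal 0 v) (ν := ν)
  have hexpand : ∀ p : ℝ × ℝ, (x + p.1 - h (x + p.1 + p.2)) ^ 2
      = (x - h (x + p.1 + p.2)) ^ 2 + 2 * x * p.1 + p.1 ^ 2 - 2 * (p.1 * h (x + p.1 + p.2)) := by
    intro p
    ring
  simp_rw [hexpand]
  rw [integral_sub, integral_add, integral_add, integral_const_mul, integral_const_mul, stein,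
    hmean, hvar]
  · ring
  exacts [hsq, hn₁, hsq.add hn₁, hn.integrable_sq, (hsq.add hn₁).add hn.integrable_sq,
    hny.const_mul 2]

end Stein

theorem esure_one_dim_general (x : ℝ) (σ₁ σz : ℝ≥0)
    (h : ℝ → ℝ) (K : ℝ≥0) (hlip : LipschitzWith K h) :
    ∫ p : ℝ × ℝ, (x - h (x + p.1 + p.2)) ^ 2
        ∂((gaussianReal 0 (σ₁ ^ 2)).prod (gaussianReal 0 (σz ^ 2)))
      = (∫ p : ℝ × ℝ, (x + p.1 - h (x + p.1 + p.2)) ^ 2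
          ∂((gaussianReal 0 (σ₁ ^ 2)).prod (gaussianReal 0 (σz ^ 2))))
        - (σ₁ : ℝ) ^ 2
        + 2 * (σ₁ : ℝ) ^ 2 * ∫ p : ℝ × ℝ, deriv h (x + p.1 + p.2)
            ∂((gaussianReal 0 (σ₁ ^ 2)).prod (gaussianReal 0 (σz ^ 2))) := by
  have := hlip.integral_sq_sub_gaussianReal_prod (σ₁ ^ 2) (ν := gaussianReal 0 (σz ^ 2))
    (memLp_id_gaussianReal' 2 (by simp)) x
  push_cast at this
  exact this

/-- One-dimensional eSURE identity: with `y₁ = x + n₁`, `y₂ = y₁ + z`, where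
`n₁ ~ N(0, σ₁²)` and `z ~ N(0, σ_z²)` are independent, and `h : ℝ → ℝ` Lipschitz,
`E[(x - h(y₂))²] = E[(y₁ - h(y₂))²] - σ₁² + 2σ₁²·E[h'(y₂)]`. -/
theorem esure_one_dim (x : ℝ) (σ₁ σz : ℝ≥0) (hσ₁ : 0 < σ₁)
    (h : ℝ → ℝ) (K : ℝ≥0) (hlip : LipschitzWith K h) :
    ∫ p : ℝ × ℝ, (x - h (x + p.1 + p.2)) ^ 2
        ∂((gaussianReal 0 (σ₁ ^ 2)).prod (gaussianReal 0 (σz ^ 2)))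
      = (∫ p : ℝ × ℝ, (x + p.1 - h (x + p.1 + p.2)) ^ 2
          ∂((gaussianReal 0 (σ₁ ^ 2)).prod (gaussianReal 0 (σz ^ 2))))
        - (σ₁ : ℝ) ^ 2
        + 2 * (σ₁ : ℝ) ^ 2 * ∫ p : ℝ × ℝ, deriv h (x + p.1 + p.2)
            ∂((gaussianReal 0 (σ₁ ^ 2)).prod (gaussianReal 0 (σz ^ 2))) :=
  esure_one_dim_general x σ₁ σz h K hlip
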